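/- arXiv:2111.02065 — 2 statements merged into one kernel-verified Lean document; each statement's English description precedes it below -/
import Mathlib

section
/- Let n, m be positive integers and G a graph with maximum degree Δ(G) ≤ m+n−3. Then the edge set of G can be partitioned into two graphs G1 and G2 with Δ(G1) ≤ n−1 and Δ(G2) ≤ m−1; equivalently, G admits a red/blue edge coloring with no red K_{1,n} and no blue K_{1,m}. -/
open SimpleGraph

/-- The subgraph of `G` consisting of edges with color `b` under the 2-coloring `c`. -/
def colorSub {α : Type*} (G : SimpleGraph α) (c : Sym2 α → Bool) (b : Bool) :
    SimpleGraph α where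
  Adj x y := G.Adj x y ∧ c s(x, y) = b
  symm := ⟨fun x y ⟨h1, h2⟩ => ⟨h1.symm, by rwa [Sym2.eq_swap]⟩⟩
  loopless := ⟨fun x ⟨h, _⟩ => G.irrefl h⟩

/-- `G` contains a copy of `H` (as a not necessarily induced subgraph). -/
def Contains {α β : Type*} (G : SimpleGraph α) (H : SimpleGraph β) : Prop :=
  ∃ f : β ↪ α, ∀ ⦃a b : β⦄, H.Adj a b → G.Adj (f a) (f b)

/-- `G → (F₁, F₂)`: every red/blue edge coloring of `G` yields a red `F₁` or a blue `F₂`. -/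
def Arrows {α β γ : Type*} (G : SimpleGraph α) (F₁ : SimpleGraph β) (F₂ : SimpleGraph γ) :
    Prop :=
  ∀ c : Sym2 α → Bool,
    Contains (colorSub G c true) F₁ ∨ Contains (colorSub G c false) F₂

/-- The star `K_{1,n}` with center `0` and `n` leaves. -/
def starG (n : ℕ) : SimpleGraph (Fin (n + 1)) where
  Adj i j := i ≠ j ∧ (i = 0 ∨ j = 0)
  symm := ⟨fun i j ⟨h1, h2⟩ => ⟨h1.symm, h2.symm⟩⟩
  loopless := ⟨fun i ⟨h, _⟩ => h rfl⟩

/-- The star forest `⊔_{j} K_{1, m j}`, with `j`-th component a star with center `⟨j, 0⟩`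
and `m j` leaves. -/
def starForest (t : ℕ) (m : Fin t → ℕ) :
    SimpleGraph (Σ j : Fin t, Fin (m j + 1)) where
  Adj x y := x.1 = y.1 ∧ x.2.val ≠ y.2.val ∧ (x.2.val = 0 ∨ y.2.val = 0)
  symm := ⟨fun x y ⟨h1, h2, h3⟩ => ⟨h1.symm, h2.symm, h3.symm⟩⟩
  loopless := ⟨fun x ⟨_, h, _⟩ => h rfl⟩

/-- The size Ramsey number `r̂(F₁, F₂)`: the minimum number of edges of a (finite) graph
`G` with `G → (F₁, F₂)`. -/
noncomputable def sizeRamsey {β γ : Type*} (F₁ : SimpleGraph β) (F₂ : SimpleGraph γ) : ℕ :=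
  sInf {N : ℕ | ∃ (V : Type) (_ : Fintype V) (G : SimpleGraph V),
    G.edgeSet.ncard = N ∧ Arrows G F₁ F₂}

/-!
Put `a = n - 1` and `b = m - 1`, so that all degrees are at most `a + b - 1`, and call an edge set
`F` red, the remaining edges blue. Among red sets with all red degrees at most `a`, take one
minimising the total excess of the blue degrees over `b`. Suppose some vertex `v₀` still has blue
degree above `b`, and look at the trails from `v₀` whose edges are alternately blue and red.
Swapping the colours along such a trail changes degrees only at its two ends, so by optimality
every vertex reached by an odd trail has red degree exactly `a`, and every vertex reached by an
even trail has blue degree at least `b`. By the degree bound no vertex is of both kinds, so red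
edges leave the odd vertices only towards even ones and blue edges leave the even vertices only
towards odd ones. Double counting these red edges gives `#odd < #even`, double counting these
blue edges gives `#even < #odd`, the strict inequalities coming from `v₀`.
-/

open Finset SimpleGraph
open scoped symmDiff

section degreeIn

variable {V : Type*} [Fintype V] [DecidableEq V]

def degreeIn (F : Finset (Sym2 V)) (x : V) : ℕ := #{y | s(x, y) ∈ F}

lemma degreeIn_insert {F : Finset (Sym2 V)} {u w : V} (huw : u ≠ w) (h : s(u, w) ∉ F)
    (x : V) :
    degreeIn (insert s(u, w) F) x =
      degreeIn F x + (if x = u then 1 else 0) + (if x = w then 1 else 0) := by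
  have hdisj : Disjoint (univ.filter fun y => s(x, y) = s(u, w))
      (univ.filter fun y => s(x, y) ∈ F) :=
    disjoint_filter.2 fun y _ hy hF => h (hy ▸ hF)
  rw [degreeIn, filter_congr (q := fun y => s(x, y) = s(u, w) ∨ s(x, y) ∈ F) (by simp),
    filter_or, card_union_of_disjoint hdisj, ← degreeIn]
  by_cases hxu : x = u
  · subst hxu
    simp [huw, filter_eq', add_comm]
  · by_cases hxw : x = w
    · subst hxw
      simp [hxu, filter_eq', add_comm]
    · simp [hxu, hxw]

lemma degreeIn_erase {F : Finset (Sym2 V)} {u w : V} (huw : u ≠ w) (h : s(u, w) ∈ F)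
    (x : V) :
    degreeIn (F.erase s(u, w)) x + (if x = u then 1 else 0) + (if x = w then 1 else 0) =
      degreeIn F x := by
  rw [← degreeIn_insert huw (notMem_erase _ F), insert_erase h]

lemma sum_degreeIn_le_sum_degreeIn {F : Finset (Sym2 V)} {S T : Finset V}
    (h : ∀ x y, s(x, y) ∈ F → x ∈ S → y ∈ T) :
    ∑ x ∈ S, degreeIn F x ≤ ∑ y ∈ T, degreeIn F y := by
  simp only [degreeIn, card_filter]
  calc ∑ x ∈ S, ∑ y, (if s(x, y) ∈ F then 1 else 0)
      = ∑ x ∈ S, ∑ y ∈ T, (if s(x, y) ∈ F then 1 else 0) := by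
        refine sum_congr rfl fun x hx => (sum_subset (subset_univ T) fun y _ hy => ?_).symm
        exact if_neg fun hxy => hy (h x y hxy hx)
    _ ≤ ∑ x, ∑ y ∈ T, (if s(x, y) ∈ F then 1 else 0) :=
        sum_le_sum_of_subset (subset_univ S)
    _ = ∑ y ∈ T, ∑ x, (if s(y, x) ∈ F then 1 else 0) := by
        rw [sum_comm]
        simp only [Sym2.eq_swap]

variable (G : SimpleGraph V) [DecidableRel G.Adj]

lemma degreeIn_edgeFinset (x : V) : degreeIn G.edgeFinset x = G.degree x := by
  rw [← card_neighborFinset_eq_degree, degreeIn]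
  congr 1
  ext y
  simp

lemma degreeIn_add_degreeIn_sdiff {F : Finset (Sym2 V)} (hF : F ⊆ G.edgeFinset) (x : V) :
    degreeIn F x + degreeIn (G.edgeFinset \ F) x = G.degree x := by
  rw [← degreeIn_edgeFinset, degreeIn, degreeIn, degreeIn, ← card_union_of_disjoint
    (disjoint_filter.2 fun y _ h h' => (mem_sdiff.1 h').2 h), ← filter_or]
  congr 1
  ext y
  have := @hF s(x, y)
  simp only [mem_filter, mem_univ, true_and, mem_sdiff]
  tauto

end degreeIn

section AltTrail

variable {V : Type*} [DecidableEq V] (G : SimpleGraph V) (F : Finset (Sym2 V))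
  (v₀ : V)

/-- Trails in `G` from `v₀` with edge set `T` whose edges lie alternately outside and inside `F`,
starting outside. The flag `p` records whether the last edge lies outside `F` (odd length). -/
inductive AltTrail : V → Bool → Finset (Sym2 V) → Prop
  | nil : AltTrail v₀ false ∅
  | cons {u x : V} {p : Bool} {T : Finset (Sym2 V)} : AltTrail u p T → G.Adj u x →
      decide (s(u, x) ∈ F) = p → s(u, x) ∉ T → AltTrail x (!p) (insert s(u, x) T)

def AltReach (p : Bool) (x : V) : Prop := ∃ T, AltTrail G F v₀ x p T

variable {G F v₀}

namespace AltTrail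

lemma subset_edgeFinset [Fintype V] [DecidableRel G.Adj] {x : V} {p : Bool}
    {T : Finset (Sym2 V)} (h : AltTrail G F v₀ x p T) : T ⊆ G.edgeFinset := by
  induction h with
  | nil => exact empty_subset _
  | cons _ hadj _ _ ih => exact insert_subset (G.mem_edgeFinset.2 hadj) ih

lemma symmDiff_subset_edgeFinset [Fintype V] [DecidableRel G.Adj] {x : V} {p : Bool}
    {T : Finset (Sym2 V)} (h : AltTrail G F v₀ x p T) (hF : F ⊆ G.edgeFinset) :
    F ∆ T ⊆ G.edgeFinset :=
  symmDiff_le_sup.trans (union_subset hF h.subset_edgeFinset)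

lemma degreeIn_symmDiff [Fintype V] {x : V} {p : Bool} {T : Finset (Sym2 V)}
    (h : AltTrail G F v₀ x p T) (y : V) :
    degreeIn (F ∆ T) y + (if p = false ∧ y = x then 1 else 0) =
      degreeIn F y + (if y = v₀ then 1 else 0) + (if p = true ∧ y = x then 1 else 0) := by
  induction h with
  | nil => simp [symmDiff_def]
  | @cons u x p T _ hadj hF hT ih =>
    have hux := hadj.ne
    cases p
    · have hnotin : s(u, x) ∉ F ∆ T := by simp_all [mem_symmDiff]
      have hflip : F ∆ insert s(u, x) T = insert s(u, x) (F ∆ T) := by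
        ext e; by_cases he : e = s(u, x) <;> simp_all [mem_symmDiff]
      rw [hflip, degreeIn_insert hux hnotin]
      simp only [Bool.false_eq_true, Bool.true_eq_false, false_and, if_false, true_and,
        Bool.not_false, add_zero] at ih ⊢
      split_ifs at ih ⊢ <;> omega
    · have hin : s(u, x) ∈ F ∆ T := by simp_all [mem_symmDiff]
      have hflip : F ∆ insert s(u, x) T = (F ∆ T).erase s(u, x) := by
        ext e; by_cases he : e = s(u, x) <;> simp_all [mem_symmDiff]
      have := degreeIn_erase hux hin y
      rw [hflip]
      simp only [Bool.false_eq_true, Bool.true_eq_false, false_and, if_false, true_and,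
        Bool.not_true, add_zero] at ih ⊢
      split_ifs at ih this ⊢ <;> omega

lemma exists_altReach_of_mem {x : V} {p : Bool} {T : Finset (Sym2 V)}
    (h : AltTrail G F v₀ x p T) {e : Sym2 V} (he : e ∈ T) :
    ∃ z ∈ e, AltReach G F v₀ (!decide (e ∈ F)) z := by
  induction h with
  | nil => simp at he
  | @cons u x p T htr hadj hF hT ih =>
    rcases mem_insert.1 he with rfl | he
    · exact ⟨x, Sym2.mem_mk_right u x, _, hF ▸ htr.cons hadj hF hT⟩
    · exact ih he

end AltTrail

lemma AltReach.next {u x : V} {p : Bool} (h : AltReach G F v₀ p u) (hadj : G.Adj u x)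
    (hF : decide (s(u, x) ∈ F) = p) : AltReach G F v₀ (!p) x ∨ AltReach G F v₀ (!p) u := by
  obtain ⟨T, hT⟩ := h
  by_cases he : s(u, x) ∈ T
  · obtain ⟨z, hz, hzr⟩ := hT.exists_altReach_of_mem he
    rw [hF] at hzr
    rcases Sym2.mem_iff.1 hz with rfl | rfl
    · exact Or.inr hzr
    · exact Or.inl hzr
  · exact Or.inl ⟨_, hT.cons hadj hF he⟩

end AltTrail

section Optimal

variable {V : Type*} [Fintype V] [DecidableEq V] (G : SimpleGraph V) [DecidableRel G.Adj]
  (a b : ℕ)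

def blueExcess (F : Finset (Sym2 V)) : ℕ := ∑ v, (G.degree v - (degreeIn F v + b))

structure IsOptimalRedSet (F : Finset (Sym2 V)) : Prop where
  subset : F ⊆ G.edgeFinset
  degreeIn_le : ∀ v, degreeIn F v ≤ a
  minimal : ∀ F' ⊆ G.edgeFinset, (∀ v, degreeIn F' v ≤ a) →
    blueExcess G b F ≤ blueExcess G b F'

lemma exists_isOptimalRedSet : ∃ F, IsOptimalRedSet G a b F := by
  obtain ⟨F, hF, hmin⟩ := exists_min_image
    ({F ∈ G.edgeFinset.powerset | ∀ v, degreeIn F v ≤ a}) (blueExcess G b)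
    ⟨∅, mem_filter.2 ⟨empty_mem_powerset _, fun v => by simp [degreeIn]⟩⟩
  simp only [mem_filter, mem_powerset] at hF hmin
  exact ⟨F, hF.1, hF.2, fun F' h₁ h₂ => hmin F' ⟨h₁, h₂⟩⟩

variable {G a b}

lemma blueExcess_lt_blueExcess {F F' : Finset (Sym2 V)} {v : V}
    (hle : ∀ y, G.degree y - (degreeIn F' y + b) ≤ G.degree y - (degreeIn F y + b))
    (hlt : G.degree v - (degreeIn F' v + b) < G.degree v - (degreeIn F v + b)) :
    blueExcess G b F' < blueExcess G b F :=
  sum_lt_sum (fun y _ => hle y) ⟨v, mem_univ v, hlt⟩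

namespace IsOptimalRedSet

variable {F : Finset (Sym2 V)} {v₀ : V}

lemma degreeIn_eq_of_altReach_true (hopt : IsOptimalRedSet G a b F)
    (hd : ∀ v, G.degree v ≤ a + b - 1) (hv₀ : degreeIn F v₀ + b < G.degree v₀) {z : V}
    (hz : AltReach G F v₀ true z) : degreeIn F z = a := by
  obtain ⟨T, hT⟩ := hz
  by_contra hne
  have hza : degreeIn F z < a := (hopt.degreeIn_le z).lt_of_ne hne
  have hflip (y : V) : degreeIn (F ∆ T) y =
      degreeIn F y + (if y = v₀ then 1 else 0) + (if y = z then 1 else 0) := by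
    simpa using hT.degreeIn_symmDiff y
  have hcap (y : V) : degreeIn (F ∆ T) y ≤ a := by
    have := hopt.degreeIn_le y
    have := hd v₀
    rw [hflip]
    split_ifs <;> subst_vars <;> omega
  refine (hopt.minimal _ (hT.symmDiff_subset_edgeFinset hopt.subset) hcap).not_gt
    (blueExcess_lt_blueExcess (v := v₀) (fun y => ?_) ?_)
  · rw [hflip]
    split_ifs <;> omega
  · rw [hflip, if_pos rfl]
    split_ifs <;> omega

lemma le_degreeIn_of_altReach_false (hopt : IsOptimalRedSet G a b F)
    (hd : ∀ v, G.degree v ≤ a + b - 1) (hv₀ : degreeIn F v₀ + b < G.degree v₀) {z : V}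
    (hz : AltReach G F v₀ false z) : degreeIn F z + b ≤ G.degree z := by
  obtain ⟨T, hT⟩ := hz
  by_contra! hlt
  have hz₀ : z ≠ v₀ := by rintro rfl; omega
  have hflip (y : V) : degreeIn (F ∆ T) y + (if y = z then 1 else 0) =
      degreeIn F y + (if y = v₀ then 1 else 0) := by
    simpa using hT.degreeIn_symmDiff y
  have hcap (y : V) : degreeIn (F ∆ T) y ≤ a := by
    have := hopt.degreeIn_le y
    have := hd v₀
    have := hflip y
    split_ifs at this <;> subst_vars <;> omega
  refine (hopt.minimal _ (hT.symmDiff_subset_edgeFinset hopt.subset) hcap).not_gt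
    (blueExcess_lt_blueExcess (v := v₀) (fun y => ?_) ?_)
  · have := hflip y
    split_ifs at this <;> subst_vars <;> omega
  · have := hflip v₀
    simp only [hz₀.symm, if_false, if_true] at this
    omega

lemma altReach_next (hopt : IsOptimalRedSet G a b F) (hd : ∀ v, G.degree v ≤ a + b - 1)
    (hv₀ : degreeIn F v₀ + b < G.degree v₀) {p : Bool} {u x : V} (hu : AltReach G F v₀ p u)
    (hadj : G.Adj u x) (hF : decide (s(u, x) ∈ F) = p) : AltReach G F v₀ (!p) x := by
  refine (hu.next hadj hF).resolve_right fun hu' => ?_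
  have hboth : AltReach G F v₀ true u ∧ AltReach G F v₀ false u := by
    cases p
    · exact ⟨hu', hu⟩
    · exact ⟨hu, hu'⟩
  have := hopt.degreeIn_eq_of_altReach_true hd hv₀ hboth.1
  have := hopt.le_degreeIn_of_altReach_false hd hv₀ hboth.2
  have := hd u
  have := hd v₀
  omega

open Classical in
lemma card_altReach_true_lt (hopt : IsOptimalRedSet G a b F) (hd : ∀ v, G.degree v ≤ a + b - 1)
    (hv₀ : degreeIn F v₀ + b < G.degree v₀) :
    #{z | AltReach G F v₀ true z} < #{z | AltReach G F v₀ false z} := by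
  refine Nat.lt_of_mul_lt_mul_left (a := a) ?_
  calc a * #{z | AltReach G F v₀ true z}
      = ∑ z ∈ {z | AltReach G F v₀ true z}, degreeIn F z := by
        rw [sum_congr rfl fun z hz => hopt.degreeIn_eq_of_altReach_true hd hv₀
          (mem_filter.1 hz).2, sum_const, smul_eq_mul, mul_comm]
    _ ≤ ∑ z ∈ {z | AltReach G F v₀ false z}, degreeIn F z := by
        refine sum_degreeIn_le_sum_degreeIn fun x y hxy hx => mem_filter.2 ⟨mem_univ y, ?_⟩
        exact hopt.altReach_next hd hv₀ (mem_filter.1 hx).2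
          (G.mem_edgeFinset.1 (hopt.subset hxy)) (decide_eq_true hxy)
    _ < ∑ z ∈ {z | AltReach G F v₀ false z}, a := by
        refine sum_lt_sum (fun z _ => hopt.degreeIn_le z) ⟨v₀, ?_, ?_⟩
        · exact mem_filter.2 ⟨mem_univ v₀, ∅, .nil⟩
        · have := hd v₀
          omega
    _ = a * #{z | AltReach G F v₀ false z} := by rw [sum_const, smul_eq_mul, mul_comm]

open Classical in
lemma card_altReach_false_lt (hopt : IsOptimalRedSet G a b F) (hd : ∀ v, G.degree v ≤ a + b - 1)
    (hv₀ : degreeIn F v₀ + b < G.degree v₀) :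
    #{z | AltReach G F v₀ false z} < #{z | AltReach G F v₀ true z} := by
  have hblue := degreeIn_add_degreeIn_sdiff G hopt.subset
  refine Nat.lt_of_mul_lt_mul_left (a := b) ?_
  calc b * #{z | AltReach G F v₀ false z}
      = ∑ z ∈ {z | AltReach G F v₀ false z}, b := by rw [sum_const, smul_eq_mul, mul_comm]
    _ < ∑ z ∈ {z | AltReach G F v₀ false z}, degreeIn (G.edgeFinset \ F) z := by
        refine sum_lt_sum (fun z hz => ?_)
          ⟨v₀, mem_filter.2 ⟨mem_univ v₀, ∅, .nil⟩, ?_⟩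
        · have := hopt.le_degreeIn_of_altReach_false hd hv₀ (mem_filter.1 hz).2
          have := hblue z
          omega
        · have := hblue v₀
          omega
    _ ≤ ∑ z ∈ {z | AltReach G F v₀ true z}, degreeIn (G.edgeFinset \ F) z := by
        refine sum_degreeIn_le_sum_degreeIn fun x y hxy hx => mem_filter.2 ⟨mem_univ y, ?_⟩
        obtain ⟨hxyE, hxyF⟩ := mem_sdiff.1 hxy
        exact hopt.altReach_next hd hv₀ (mem_filter.1 hx).2 (G.mem_edgeFinset.1 hxyE)
          (decide_eq_false hxyF)
    _ ≤ ∑ z ∈ {z | AltReach G F v₀ true z}, b := by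
        refine sum_le_sum fun z hz => ?_
        have := hopt.degreeIn_eq_of_altReach_true hd hv₀ (mem_filter.1 hz).2
        have := hblue z
        have := hd z
        omega
    _ = b * #{z | AltReach G F v₀ true z} := by rw [sum_const, smul_eq_mul, mul_comm]

theorem degree_le (hopt : IsOptimalRedSet G a b F) (hd : ∀ v, G.degree v ≤ a + b - 1) (v : V) :
    G.degree v ≤ degreeIn F v + b := by
  by_contra! hv
  exact lt_asymm (hopt.card_altReach_true_lt hd hv) (hopt.card_altReach_false_lt hd hv)

end IsOptimalRedSet

end Optimal

section Coloring

variable {V : Type*} [Fintype V]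

instance (G : SimpleGraph V) [DecidableRel G.Adj] (c : Sym2 V → Bool) (b : Bool) :
    DecidableRel (colorSub G c b).Adj :=
  fun x y => inferInstanceAs (Decidable (G.Adj x y ∧ c s(x, y) = b))

lemma Contains.exists_le_degree {H : SimpleGraph V} [DecidableRel H.Adj] {n : ℕ}
    (h : Contains H (starG n)) : ∃ v, n ≤ H.degree v := by
  obtain ⟨f, hf⟩ := h
  refine ⟨f 0, ?_⟩
  rw [← card_neighborFinset_eq_degree]
  calc n = #(univ.map ((Fin.succEmb n).trans f)) := by simp
    _ ≤ #(H.neighborFinset (f 0)) := by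
      refine card_le_card fun y hy => ?_
      obtain ⟨i, -, rfl⟩ := mem_map.1 hy
      exact (H.mem_neighborFinset _ _).2 (hf ⟨(Fin.succ_ne_zero i).symm, Or.inl rfl⟩)

variable [DecidableEq V] (G : SimpleGraph V) [DecidableRel G.Adj]

lemma degree_colorSub_true {F : Finset (Sym2 V)} (hF : F ⊆ G.edgeFinset) (v : V) :
    (colorSub G (fun e => decide (e ∈ F)) true).degree v = degreeIn F v := by
  rw [← card_neighborFinset_eq_degree, degreeIn]
  congr 1
  ext y
  rw [mem_neighborFinset]
  simp only [colorSub, decide_eq_true_eq, mem_filter, mem_univ, true_and]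
  exact ⟨And.right, fun h => ⟨G.mem_edgeFinset.1 (hF h), h⟩⟩

lemma degree_colorSub_false (F : Finset (Sym2 V)) (v : V) :
    (colorSub G (fun e => decide (e ∈ F)) false).degree v = degreeIn (G.edgeFinset \ F) v := by
  rw [← card_neighborFinset_eq_degree, degreeIn]
  congr 1
  ext y
  rw [mem_neighborFinset]
  simp [colorSub]

theorem exists_coloring_degree_colorSub_le {a b : ℕ} (hd : ∀ v, G.degree v ≤ a + b - 1) :
    ∃ c : Sym2 V → Bool,
      ∀ v, (colorSub G c true).degree v ≤ a ∧ (colorSub G c false).degree v ≤ b := by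
  obtain ⟨F, hopt⟩ := exists_isOptimalRedSet G a b
  refine ⟨fun e => decide (e ∈ F), fun v => ?_⟩
  rw [degree_colorSub_true G hopt.subset, degree_colorSub_false]
  have := degreeIn_add_degreeIn_sdiff G hopt.subset v
  have := hopt.degree_le hd v
  exact ⟨hopt.degreeIn_le v, by omega⟩

end Coloring

/-- If `Δ(G) ≤ m + n - 3`, then `G` has a `(K_{1,n}, K_{1,m})`-free
red/blue edge coloring. -/
theorem free_coloring_of_maxDegree_le {V : Type} [Fintype V] (G : SimpleGraph V)
    [DecidableRel G.Adj] (n m : ℕ) (hn : 1 ≤ n) (hm : 1 ≤ m)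
    (hΔ : G.maxDegree ≤ m + n - 3) :
    ∃ c : Sym2 V → Bool,
      ¬ Contains (colorSub G c true) (starG n) ∧
      ¬ Contains (colorSub G c false) (starG m) := by
  classical
  obtain ⟨c, hc⟩ := exists_coloring_degree_colorSub_le G (a := n - 1) (b := m - 1) fun v => by
    have := G.degree_le_maxDegree v
    omega
  refine ⟨c, fun h => ?_, fun h => ?_⟩
  · obtain ⟨v, hv⟩ := h.exists_le_degree
    have := (hc v).1
    omega
  · obtain ⟨v, hv⟩ := h.exists_le_degree
    have := (hc v).2
    omega
end

section
/- For positive integers s, t, m, n, the graph (s+t−1)K_{1,m+n−1}, the disjoint union of s+t−1 stars each with m+n−1 edges, is Ramsey for the pair (sK_{1,n}, tK_{1,m}): every red/blue edge coloring contains either s disjoint red copies of K_{1,n} or t disjoint blue copies of K_{1,m}. -/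
/-!
Every star of `(s+t-1)K_{1,m+n-1}` has `m+n-1` edges, so by pigeonhole it has at least `n` red
or at least `m` blue edges. By pigeonhole again, among the `s+t-1` stars there are `s` stars
with `n` red edges each or `t` stars with `m` blue edges each, and these contain a red
`sK_{1,n}` or a blue `tK_{1,m}`.
-/

open SimpleGraph

open Finset

theorem Finset.le_card_filter_or_le_card_filter {α : Type*} (S : Finset α) {P Q : α → Prop}
    [DecidablePred P] [DecidablePred Q] {a b : ℕ} (hS : a + b - 1 ≤ #S)
    (hPQ : ∀ x ∈ S, P x ∨ Q x) : a ≤ #(S.filter P) ∨ b ≤ #(S.filter Q) := by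
  classical
  have : #S ≤ #(S.filter P) + #(S.filter Q) :=
    calc #S = #(S.filter fun x => P x ∨ Q x) := by rw [filter_true_of_mem hPQ]
      _ ≤ #(S.filter P) + #(S.filter Q) := by rw [filter_or]; exact card_union_le _ _
  omega

def Fin.consZeroEmb {q L : ℕ} (e : Fin q ↪ Fin L) : Fin (q + 1) ↪ Fin (L + 1) where
  toFun := Fin.cons 0 (Fin.succ ∘ e)
  inj' := Fin.cons_injective_iff.2
    ⟨fun ⟨_, hx⟩ => Fin.succ_ne_zero _ hx, (Fin.succ_injective L).comp e.injective⟩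

section StarForest

variable {r L p q : ℕ} (c : Sym2 (Σ _ : Fin r, Fin (L + 1)) → Bool) (b : Bool)

theorem contains_starForest_colorSub_of_embeddings (g : Fin p ↪ Fin r)
    (e : Fin p → Fin q ↪ Fin L)
    (hc : ∀ j i, c s(⟨g j, 0⟩, ⟨g j, (e j i).succ⟩) = b) :
    Contains (colorSub (starForest r fun _ => L) c b) (starForest p fun _ => q) := by
  refine ⟨g.sigmaMap fun j => Fin.consZeroEmb (e j), ?_⟩
  have centre_adj : ∀ j (k : Fin (q + 1)), k ≠ 0 → (colorSub (starForest r fun _ => L) c b).Adj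
      ⟨g j, 0⟩ ⟨g j, Fin.consZeroEmb (e j) k⟩ := by
    intro j k hk
    obtain ⟨i, rfl⟩ := Fin.exists_succ_eq.2 hk
    exact ⟨⟨rfl, by simp [Fin.consZeroEmb, eq_comm], Or.inl rfl⟩, hc j i⟩
  rintro ⟨j, k⟩ ⟨j', k'⟩ ⟨rfl, hne, hk | hk'⟩
  · obtain rfl : k = 0 := Fin.ext hk
    exact centre_adj j k' fun h => hne (by rw [h])
  · obtain rfl : k' = 0 := Fin.ext hk'
    exact (centre_adj j k fun h => hne (by rw [h])).symm

def starColorDegree (j : Fin r) : ℕ := #{i : Fin L | c s(⟨j, 0⟩, ⟨j, i.succ⟩) = b}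

theorem contains_starForest_colorSub_of_le_card (h : p ≤ #{j | q ≤ starColorDegree c b j}) :
    Contains (colorSub (starForest r fun _ => L) c b) (starForest p fun _ => q) := by
  set g := orderEmbOfCardLe _ h
  have hg j : q ≤ starColorDegree c b (g j) := (mem_filter.1 (orderEmbOfCardLe_mem _ h j)).2
  refine contains_starForest_colorSub_of_embeddings c b g.toEmbedding
    (fun j => (orderEmbOfCardLe _ (hg j)).toEmbedding) fun j i => ?_
  exact (mem_filter.1 (orderEmbOfCardLe_mem _ (hg j) i)).2

end StarForest

theorem stars_arrows_same_size_stars_general (s t m n : ℕ) :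
    Arrows (starForest (s + t - 1) fun _ => m + n - 1)
      (starForest s fun _ => n) (starForest t fun _ => m) := by
  intro c
  have star_rich j : n ≤ starColorDegree c true j ∨ m ≤ starColorDegree c false j :=
    univ.le_card_filter_or_le_card_filter (by simp [add_comm])
      fun _ _ => Bool.eq_false_or_eq_true _
  rcases univ.le_card_filter_or_le_card_filter (a := s) (b := t) (by simp)
    fun j _ => star_rich j with h | h
  · exact .inl (contains_starForest_colorSub_of_le_card c true h)
  · exact .inr (contains_starForest_colorSub_of_le_card c false h)

/-- `(s+t-1)K_{1,m+n-1} → (sK_{1,n}, tK_{1,m})`. -/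
theorem stars_arrows_same_size_stars (s t m n : ℕ) (hs : 1 ≤ s) (ht : 1 ≤ t)
    (hm : 1 ≤ m) (hn : 1 ≤ n) :
    Arrows (starForest (s + t - 1) fun _ => m + n - 1)
      (starForest s fun _ => n) (starForest t fun _ => m) :=
  stars_arrows_same_size_stars_general s t m n
end
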